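/- Let I be a compact interval in the real line and let f : I → I be a continuous chaotic map. Then for every fixed point z of f and every nonempty open set W ⊆ I there exists a point c ∈ W such that the ω-limit set ω(f, c) contains z and also contains a point different from z. -/

import Mathlib

/-! Since `z` is fixed, `d(fⁿ z, fⁿ y) = d(z, fⁿ y)`. Chaos gives `y ∈ W` with
`liminf d(z, fⁿ y) = 0`, so the orbit of `y` accumulates at `z`, and with
`limsup d(z, fⁿ y) ≥ δ > 0`, so by compactness it also accumulates somewhere outside a
neighbourhood of `z`. -/

open Filter

/-- The ω-limit set of `c` under `f`: all `x` such that `f^[nₖ] c → x` for some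
sequence of positive integers `nₖ → ∞`. -/
def omegaLimitSet (f : ℝ → ℝ) (c : ℝ) : Set ℝ :=
  {x | ∃ nk : ℕ → ℕ, (∀ k, 0 < nk k) ∧ Tendsto nk atTop atTop ∧
    Tendsto (fun k => f^[nk k] c) atTop (nhds x)}

theorem mem_omegaLimitSet_of_mapClusterPt {f : ℝ → ℝ} {c x : ℝ}
    (h : MapClusterPt x atTop fun n => f^[n] c) : x ∈ omegaLimitSet f c := by
  obtain ⟨ψ, hψ, hlim⟩ := h.tendsto_subseq
  have hshift : Tendsto (fun k : ℕ => k + 1) atTop atTop := tendsto_add_atTop_nat 1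
  exact ⟨fun k => ψ (k + 1), fun k => (Nat.succ_pos k).trans_le (hψ.id_le _),
    hψ.tendsto_atTop.comp hshift, hlim.comp hshift⟩

section ProximalOrbit

variable {X : Type*} [PseudoMetricSpace X] {u : ℕ → X} {z : X}

theorem mapClusterPt_of_liminf_dist_eq_zero (hu : Bornology.IsBounded (Set.range u))
    (h : liminf (fun n => dist z (u n)) atTop = 0) : MapClusterPt z atTop u := by
  obtain ⟨r, hr⟩ := (Metric.isBounded_iff_subset_closedBall z).1 hu
  have hbdd : IsBoundedUnder (· ≤ ·) atTop fun n => dist z (u n) :=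
    isBoundedUnder_of ⟨r, fun n => dist_comm z (u n) ▸ hr (Set.mem_range_self n)⟩
  refine Metric.nhds_basis_ball.mapClusterPt_iff_frequently.2 fun ε hε => ?_
  have hclose : ∃ᶠ n in atTop, dist z (u n) < ε :=
    frequently_lt_of_liminf_lt hbdd.isCoboundedUnder_ge (h.symm ▸ hε)
  exact hclose.mono fun n hn => by rwa [Metric.mem_ball, dist_comm]

theorem exists_mapClusterPt_ne_of_limsup_dist_pos {K : Set X} (hK : IsCompact K)
    (hu : ∀ n, u n ∈ K) (h : 0 < limsup (fun n => dist z (u n)) atTop) :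
    ∃ w, MapClusterPt w atTop u ∧ w ≠ z := by
  set ε := limsup (fun n => dist z (u n)) atTop / 2
  have hbdd : IsBoundedUnder (· ≥ ·) atTop fun n => dist z (u n) :=
    isBoundedUnder_of ⟨0, fun n => dist_nonneg⟩
  have hfar : ∃ᶠ n in atTop, ε < dist z (u n) :=
    frequently_lt_of_lt_limsup hbdd.isCoboundedUnder_le (half_lt_self h)
  have hKfar : IsCompact (K ∩ {x | ε ≤ dist z x}) :=
    hK.inter_right (isClosed_le continuous_const (continuous_const.dist continuous_id))
  obtain ⟨w, ⟨-, hw⟩, hcluster⟩ :=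
    hKfar.exists_mapClusterPt_of_frequently (hfar.mono fun n hn => ⟨hu n, hn.le⟩)
  refine ⟨w, hcluster, ?_⟩
  rintro rfl
  rw [Set.mem_ofPred_eq, dist_self] at hw
  exact hw.not_gt (half_pos h)

end ProximalOrbit

theorem chaotic_omega_limit_contains_fixed_point_and_more
    (a b : ℝ) (f : ℝ → ℝ)
    (hmap : Set.MapsTo f (Set.Icc a b) (Set.Icc a b))
    (hchaos : ∃ δ : ℝ, 0 < δ ∧
      ∀ x ∈ Set.Icc a b, ∀ V : Set ℝ, V ⊆ Set.Icc a b →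
        (∃ U : Set ℝ, IsOpen U ∧ V = Set.Icc a b ∩ U) → V.Nonempty →
        ∃ y ∈ V,
          δ ≤ limsup (fun n => |f^[n] x - f^[n] y|) atTop ∧
          liminf (fun n => |f^[n] x - f^[n] y|) atTop = 0)
    (z : ℝ) (hz : z ∈ Set.Icc a b) (hfz : f z = z)
    (W : Set ℝ) (hWsub : W ⊆ Set.Icc a b)
    (hWopen : ∃ U : Set ℝ, IsOpen U ∧ W = Set.Icc a b ∩ U)
    (hWne : W.Nonempty) :
    ∃ c ∈ W, z ∈ omegaLimitSet f c ∧ ∃ w ∈ omegaLimitSet f c, w ≠ z := by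
  obtain ⟨δ, hδ, hchaos⟩ := hchaos
  obtain ⟨y, hyW, hsup, hinf⟩ := hchaos z hz W hWsub hWopen hWne
  have horbit : ∀ n, f^[n] y ∈ Set.Icc a b := fun n => hmap.iterate n (hWsub hyW)
  have hdist : (fun n => |f^[n] z - f^[n] y|) = fun n => dist z (f^[n] y) := by
    funext n
    rw [Function.iterate_fixed hfz, Real.dist_eq]
  rw [hdist] at hsup hinf
  have hbounded : Bornology.IsBounded (Set.range fun n => f^[n] y) :=
    isCompact_Icc.isBounded.subset (Set.range_subset_iff.2 horbit)
  obtain ⟨w, hw, hwz⟩ :=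
    exists_mapClusterPt_ne_of_limsup_dist_pos isCompact_Icc horbit (hδ.trans_le hsup)
  exact ⟨y, hyW,
    mem_omegaLimitSet_of_mapClusterPt (mapClusterPt_of_liminf_dist_eq_zero hbounded hinf), w, mem_omegaLimitSet_of_mapClusterPt hw, hwz⟩
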